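/- In an admissible cycle of degree n, the kernel of the map with domain M(αⱼ) is the simple module Sⱼ (the simple at the target of αⱼ) for j ∈ {2,…,n−1}, and the image of the map M(α₂) → M(α₁⁻¹ p αₙ⁻¹) is the simple module S₁. -/

import Mathlib

open scoped Classical

/-- A finite-type-free presentation of a quiver: vertices, arrows, source and target. -/
structure Quiv where
  V : Type
  E : Type
  s : E → V
  t : E → V

namespace Quiv

variable (Q : Quiv)

/-- A (composable) path, given as the list of its arrows. -/
def IsPath (l : List Q.E) : Prop := l.Chain' (fun a b => Q.t a = Q.s b)

/-- A Γ-path for the set of monomial quadratic relations `R`: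
a composable sequence of arrows each consecutive pair of which lies in `R`. -/
def GammaPath (R : Set (List Q.E)) (l : List Q.E) : Prop :=
  l.Chain' (fun a b => Q.t a = Q.s b ∧ [a, b] ∈ R)

/-- The list of arrows `l` starts at the vertex `x`. -/
def StartsAt (x : Q.V) (l : List Q.E) : Prop := ∀ h : l ≠ [], Q.s (l.head h) = x

/-- The list of arrows `l` ends at the vertex `y`. -/
def EndsAt (y : Q.V) (l : List Q.E) : Prop := ∀ h : l ≠ [], Q.t (l.getLast h) = y

/-- `l` is a path from `x` to `y` (a stationary path when `l = []`). -/
def FromTo (x y : Q.V) (l : List Q.E) : Prop :=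
  IsPath Q l ∧ StartsAt Q x l ∧ EndsAt Q y l ∧ (l = [] → x = y)

/-- An allowed path: a composable path no consecutive pair of which lies in the
set of quadratic monomial relations `R`; these are exactly the paths which are
nonzero in the quadratic monomial algebra `kQ/⟨R⟩`. -/
def Allowed (R : Set (List Q.E)) (l : List Q.E) : Prop :=
  l.Chain' (fun a b => Q.t a = Q.s b ∧ [a, b] ∉ R)

/-- The composition `u ∘_{s,r} v = α₁⋯α_{s-1} β₁⋯βₘ α_r⋯αₙ` of the paths
`u = α₁⋯αₙ` and `v = β₁⋯βₘ` at the (1-indexed) positions `s ≤ r`. -/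
def compSR (u v : List Q.E) (s r : ℕ) : List Q.E := u.take (s - 1) ++ v ++ u.drop (r - 1)

/-- The composition `u ∘_s v` at position `s`, i.e. `u ∘_{s,s+1} v`: replace the `s`-th
arrow of `u` by the path `v`. -/
def compS (u v : List Q.E) (s : ℕ) : List Q.E := u.take (s - 1) ++ v ++ u.drop s

/-- `(u,v)` is an `(s,r)` Γ-bypass. -/
def IsBypassSR (R : Set (List Q.E)) (u v : List Q.E) (s r : ℕ) : Prop :=
  1 ≤ s ∧ s ≤ r ∧ r ≤ u.length ∧ GammaPath Q R (compSR Q u v s r)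

/-- `(u,v)` is an `(s,s+1)` Γ-bypass. -/
def IsBypass (R : Set (List Q.E)) (u v : List Q.E) (s : ℕ) : Prop :=
  1 ≤ s ∧ s ≤ u.length ∧ GammaPath Q R (compS Q u v s)

end Quiv

namespace Quiv

/-- A walk in the quiver `Q`: a base vertex together with a list of letters, each letter
being an arrow together with a direction (`true` = direct letter, `false` = inverse
letter). -/
structure Walk (Q : Quiv) where
  base : Q.V
  letters : List (Q.E × Bool)

namespace Walk

/-- The endpoint of a letter. -/
def nextV (Q : Quiv) (v : Q.V) (l : Q.E × Bool) : Q.V := if l.2 then Q.t l.1 else Q.s l.1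

/-- The starting point of a letter. -/
def startV (Q : Quiv) (l : Q.E × Bool) : Q.V := if l.2 then Q.s l.1 else Q.t l.1

variable {Q : Quiv} (W : Walk Q)

/-- The `i`-th vertex of a walk (there are `length + 1` of them). -/
def vtx (i : ℕ) : Q.V := (W.letters.take i).foldl (nextV Q) W.base

/-- The walk is well-formed: each letter starts where the previous one ends. -/
def OK : Prop := ∀ i : Fin W.letters.length, startV Q (W.letters.get i) = W.vtx i

/-- The walk is reduced: no letter is immediately followed by its formal inverse. -/
def Reduced : Prop :=
  ∀ i, ∀ h : i + 1 < W.letters.length,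
    W.letters.get ⟨i + 1, h⟩ ≠
      ((W.letters.get ⟨i, by omega⟩).1, !(W.letters.get ⟨i, by omega⟩).2)

/-- The walk avoids the monomial relations `R`: no contiguous subwalk consisting of
direct letters is a path of `R`, and no contiguous subwalk consisting of inverse letters
is the reverse of a path of `R`. -/
def Avoids (R : Set (List Q.E)) : Prop :=
  ¬ ∃ i m : ℕ, 1 ≤ m ∧ i + m ≤ W.letters.length ∧
    ((((W.letters.drop i).take m).map Prod.fst ∈ R ∧
        ∀ x ∈ (W.letters.drop i).take m, x.2 = true) ∨
      ((((W.letters.drop i).take m).map Prod.fst).reverse ∈ R ∧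
        ∀ x ∈ (W.letters.drop i).take m, x.2 = false))

/-- The walk is a string for the monomial relations `R`. -/
def IsString (R : Set (List Q.E)) : Prop := W.OK ∧ W.Reduced ∧ W.Avoids R

end Walk

/-- The walk consisting of the single direct letter given by an arrow. -/
def arrowWalk (Q : Quiv) (a : Q.E) : Walk Q := ⟨Q.s a, [(a, true)]⟩

/-- The stationary walk at a vertex. -/
def trivWalk (Q : Quiv) (x : Q.V) : Walk Q := ⟨x, []⟩

/-- A representation of the quiver `Q` over the field `k` (equivalently, a module over
the path algebra; a module over `kQ/I` when the maps of the arrows of a relation of `I`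
compose to zero). -/
structure Rep (Q : Quiv) (k : Type) [Field k] where
  carrier : Q.V → Type
  [acg : ∀ v, AddCommGroup (carrier v)]
  [mod : ∀ v, Module k (carrier v)]
  map : ∀ e : Q.E, carrier (Q.s e) →ₗ[k] carrier (Q.t e)

attribute [instance] Rep.acg Rep.mod

/-- A morphism of representations. -/
structure RepHom {Q : Quiv} {k : Type} [Field k] (X Y : Rep Q k) where
  app : ∀ v, X.carrier v →ₗ[k] Y.carrier v
  comm : ∀ e : Q.E, (Y.map e).comp (app (Q.s e)) = (app (Q.t e)).comp (X.map e)

namespace RepHom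

variable {Q : Quiv} {k : Type} [Field k]

/-- Composition of morphisms of representations. -/
def comp {X Y Z : Rep Q k} (g : RepHom Y Z) (f : RepHom X Y) : RepHom X Z where
  app v := (g.app v).comp (f.app v)
  comm e := by
    rw [← LinearMap.comp_assoc, g.comm, LinearMap.comp_assoc, f.comm,
      LinearMap.comp_assoc]

/-- The identity morphism of a representation. -/
def id (X : Rep Q k) : RepHom X X where
  app v := LinearMap.id
  comm e := by simp

/-- A morphism of representations is an isomorphism when it has a two-sided inverse. -/
def IsIso {X Y : Rep Q k} (f : RepHom X Y) : Prop :=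
  ∃ g : RepHom Y X, g.comp f = RepHom.id X ∧ f.comp g = RepHom.id Y

/-- A morphism of representations is nonzero. -/
def NeZero {X Y : Rep Q k} (f : RepHom X Y) : Prop := ∃ v x, f.app v x ≠ 0

end RepHom

/-- A representation is indecomposable: it is nonzero and its only idempotent
endomorphisms are `0` and the identity. -/
def Indecomposable {Q : Quiv} {k : Type} [Field k] (X : Rep Q k) : Prop :=
  (∃ v, ∃ x : X.carrier v, x ≠ 0) ∧
    ∀ f : RepHom X X, f.comp f = f → (∀ v x, f.app v x = 0) ∨ f = RepHom.id X

/-- The string module `M(w)` of a walk `w`: at the vertex `v` it has one basis element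
for every vertex position of the walk lying at `v`, and an arrow acts by the sum of the
identity maps prescribed by the letters of the walk in which it appears. -/
noncomputable def StringMod (k : Type) [Field k] (Q : Quiv) (W : Walk Q) : Rep Q k where
  carrier v := {i : Fin (W.letters.length + 1) // W.vtx (i : ℕ) = v} → k
  map e :=
    ∑ i : Fin W.letters.length,
      ((if h : W.letters.get i = (e, true) ∧ W.vtx (i : ℕ) = Q.s e ∧
            W.vtx ((i : ℕ) + 1) = Q.t e then
          (LinearMap.single k (fun _ => k) ⟨i.succ, by simpa using h.2.2⟩).comp
            (LinearMap.proj ⟨i.castSucc, by simpa using h.2.1⟩)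
        else 0)
      + (if h : W.letters.get i = (e, false) ∧ W.vtx ((i : ℕ) + 1) = Q.s e ∧
            W.vtx (i : ℕ) = Q.t e then
          (LinearMap.single k (fun _ => k) ⟨i.castSucc, by simpa using h.2.2⟩).comp
            (LinearMap.proj ⟨i.succ, by simpa using h.2.1⟩)
        else 0))

/-- The natural "top-to-socle" morphisms between string modules: `φ` is the morphism
whose matrix has a single nonzero entry, equal to `1`, between the basis vector at the
walk position `posSrc` of the source and the one at the walk position `posTgt` of the
target. -/
def IsEntryMap {Q : Quiv} {k : Type} [Field k] (Wb Wa : Walk Q) (posSrc posTgt : ℕ)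
    (φ : RepHom (StringMod k Q Wb) (StringMod k Q Wa)) : Prop :=
  ∀ v (x : (StringMod k Q Wb).carrier v) jp, φ.app v x jp =
    if (jp.1 : ℕ) = posTgt then
      (∑ ip, if (ip.1 : ℕ) = posSrc then x ip else 0)
    else 0

end Quiv

namespace Quiv

/-- The walk `a⁻¹ p z⁻¹` obtained by concatenating the inverse of the arrow `a`, the
(direct) path `p`, and the inverse of the arrow `z`; for `u = α₁⋯αₙ` and `a = α₁`,
`z = αₙ`, this is the walk `α₁⁻¹ p αₙ⁻¹` underlying the non-uniserial module of an
admissible cycle. -/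
def bigWalk (Q : Quiv) (a z : Q.E) (p : List Q.E) : Walk Q :=
  ⟨Q.t a, (a, false) :: (p.map (fun b => (b, true)) ++ [(z, false)])⟩

/-- The walk underlying the string module `M(p)` of a (direct) path `p` from `x`. -/
def pathWalk (Q : Quiv) (x : Q.V) (p : List Q.E) : Walk Q :=
  ⟨x, p.map (fun b => (b, true))⟩

/-- The walk `p z⁻¹` obtained by concatenating the (direct) path `p` from `x` and the
inverse of the arrow `z`. -/
def pathInvWalk (Q : Quiv) (x : Q.V) (p : List Q.E) (z : Q.E) : Walk Q :=
  ⟨x, p.map (fun b => (b, true)) ++ [(z, false)]⟩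

/-- The data `(u, p)` of a reduced basic cochain `χ^p_u`: `u` is a Γ-path from `x` to
`y`, `p` is a parallel path which is nonzero in `A` (i.e. avoids the relations), `p` does
not start with the first arrow of `u` and does not end with the last arrow of `u`. -/
def IsReducedBasic (Q : Quiv) (R : Set (List Q.E)) (x y : Q.V) (u p : List Q.E) : Prop :=
  Q.GammaPath R u ∧ Q.FromTo x y u ∧ Q.Allowed R p ∧ Q.FromTo x y p ∧
    (∀ (hp : p ≠ []) (hu : u ≠ []), p.head hp ≠ u.head hu) ∧
    (∀ (hp : p ≠ []) (hu : u ≠ []), p.getLast hp ≠ u.getLast hu)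

end Quiv

namespace Quiv

/-- The `j`-th walk (cyclically) of the admissible cycle `C(u,p)` associated with a
reduced basic cochain `χ^p_u`, `u` of length `n ≥ 2`: the cycle
`M(α₁⁻¹pαₙ⁻¹) → M(α_{n-1}) → M(α_{n-2}) → ⋯ → M(α₂) → M(α₁⁻¹pαₙ⁻¹)` has period `n-1`,
position `0` carrying the walk `α₁⁻¹ p αₙ⁻¹` and position `j` (for `1 ≤ j ≤ n-2`)
carrying the one-arrow walk of `α_{n-j}`. -/
def cycWalk (Q : Quiv) (u p : List Q.E) (hu : u ≠ []) (n j : ℕ) : Walk Q :=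
  if j % (n - 1) = 0 then bigWalk Q (u.head hu) (u.getLast hu) p
  else arrowWalk Q (u.getD (n - 1 - (j % (n - 1))) (u.head hu))

/-- The position, in the `j`-th walk of the admissible cycle, of the top basis vector
through which the `j`-th natural morphism of the cycle factors. -/
def cycPosSrc (Q : Quiv) (p : List Q.E) (n j : ℕ) : ℕ :=
  if j % (n - 1) = 0 then p.length + 2 else 0

/-- The position, in the `(j+1)`-st walk of the admissible cycle, of the socle basis
vector through which the `j`-th natural morphism of the cycle factors. -/
def cycPosTgt (Q : Quiv) (n j : ℕ) : ℕ := if (j + 1) % (n - 1) = 0 then 0 else 1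

end Quiv


namespace Quiv
open Walk

variable {Q : Quiv} {k : Type} [Field k]

/-- No letter of `W` leaves position `pt` (i.e. `pt` is in the socle). -/
def NoOut (W : Walk Q) (pt : ℕ) : Prop :=
  ∀ i : Fin W.letters.length,
    ¬((i : ℕ) = pt ∧ (W.letters.get i).2 = true) ∧
    ¬((i : ℕ) + 1 = pt ∧ (W.letters.get i).2 = false)

/-- No letter of `W` enters position `ps` (i.e. `ps` is in the top). -/
def NoIn (W : Walk Q) (ps : ℕ) : Prop :=
  ∀ i : Fin W.letters.length,
    ¬((i : ℕ) + 1 = ps ∧ (W.letters.get i).2 = true) ∧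
    ¬((i : ℕ) = ps ∧ (W.letters.get i).2 = false)

lemma carrier_add_apply {W : Walk Q} {v : Q.V} (x y : (StringMod k Q W).carrier v)
    (ip : {i : Fin (W.letters.length + 1) // W.vtx (i : ℕ) = v}) :
    (x + y) ip = x ip + y ip := rfl

lemma carrier_smul_apply {W : Walk Q} {v : Q.V} (c : k) (x : (StringMod k Q W).carrier v)
    (ip : {i : Fin (W.letters.length + 1) // W.vtx (i : ℕ) = v}) :
    (c • x) ip = c * x ip := rfl

lemma carrier_zero_apply {W : Walk Q} {v : Q.V}
    (ip : {i : Fin (W.letters.length + 1) // W.vtx (i : ℕ) = v}) :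
    (0 : (StringMod k Q W).carrier v) ip = 0 := rfl

lemma carrier_sum_apply {W : Walk Q} {v : Q.V} {ι : Type*} (s : Finset ι)
    (f : ι → (StringMod k Q W).carrier v)
    (ip : {i : Fin (W.letters.length + 1) // W.vtx (i : ℕ) = v}) :
    (∑ i ∈ s, f i) ip = ∑ i ∈ s, f i ip :=
  Finset.sum_apply _ _ _

lemma stringMod_map_def (W : Walk Q) (e : Q.E) :
    (StringMod k Q W).map e =
      ∑ i : Fin W.letters.length,
        ((if h : W.letters.get i = (e, true) ∧ W.vtx (i : ℕ) = Q.s e ∧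
              W.vtx ((i : ℕ) + 1) = Q.t e then
            (LinearMap.single k (fun _ => k) ⟨i.succ, by simpa using h.2.2⟩).comp
              (LinearMap.proj ⟨i.castSucc, by simpa using h.2.1⟩)
          else 0)
        + (if h : W.letters.get i = (e, false) ∧ W.vtx ((i : ℕ) + 1) = Q.s e ∧
              W.vtx (i : ℕ) = Q.t e then
            (LinearMap.single k (fun _ => k) ⟨i.castSucc, by simpa using h.2.2⟩).comp
              (LinearMap.proj ⟨i.succ, by simpa using h.2.1⟩)
          else 0)) := rfl

/-- The linear map underlying a single-entry morphism. -/
noncomputable def entryApp (Wb Wa : Walk Q) (ps pt : ℕ) (v : Q.V) :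
    ((StringMod k Q Wb).carrier v) →ₗ[k] ((StringMod k Q Wa).carrier v) where
  toFun x := fun jp =>
    if (jp.1 : ℕ) = pt then (∑ ip, if (ip.1 : ℕ) = ps then x ip else 0) else 0
  map_add' x y := by
    funext jp
    show (if (jp.1 : ℕ) = pt then (∑ ip, if (ip.1 : ℕ) = ps then (x + y) ip else 0) else 0)
      = (if (jp.1 : ℕ) = pt then (∑ ip, if (ip.1 : ℕ) = ps then x ip else 0) else 0)
      + (if (jp.1 : ℕ) = pt then (∑ ip, if (ip.1 : ℕ) = ps then y ip else 0) else 0)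
    by_cases h : (jp.1 : ℕ) = pt
    · simp only [if_pos h, ← Finset.sum_add_distrib]
      refine Finset.sum_congr rfl fun ip _ => ?_
      by_cases hip : (ip.1 : ℕ) = ps
      · simp only [if_pos hip]; rfl
      · simp only [if_neg hip, add_zero]
    · simp only [if_neg h, add_zero]
  map_smul' c x := by
    funext jp
    show (if (jp.1 : ℕ) = pt then (∑ ip, if (ip.1 : ℕ) = ps then (c • x) ip else 0) else 0)
      = c * (if (jp.1 : ℕ) = pt then (∑ ip, if (ip.1 : ℕ) = ps then x ip else 0) else 0)
    by_cases h : (jp.1 : ℕ) = pt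
    · simp only [if_pos h, Finset.mul_sum]
      refine Finset.sum_congr rfl fun ip _ => ?_
      by_cases hip : (ip.1 : ℕ) = ps
      · simp only [if_pos hip]; rfl
      · simp only [if_neg hip, mul_zero]
    · simp only [if_neg h, mul_zero]

lemma entryApp_apply (Wb Wa : Walk Q) (ps pt : ℕ) (v : Q.V)
    (x : (StringMod k Q Wb).carrier v) (jp) :
    entryApp (k := k) Wb Wa ps pt v x jp =
      if (jp.1 : ℕ) = pt then (∑ ip, if (ip.1 : ℕ) = ps then x ip else 0) else 0 := rfl

lemma entryApp_apply_ne (Wb Wa : Walk Q) (ps pt : ℕ) (v : Q.V)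
    (x : (StringMod k Q Wb).carrier v) (jp) (h : ((jp : {i : Fin (Wa.letters.length + 1) //
      Wa.vtx (i : ℕ) = v}).1 : ℕ) ≠ pt) :
    entryApp (k := k) Wb Wa ps pt v x jp = 0 := by
  rw [entryApp_apply, if_neg h]

lemma stringMod_map_apply (W : Walk Q) (e : Q.E) (x : (StringMod k Q W).carrier (Q.s e))
    (jp : {i : Fin (W.letters.length + 1) // W.vtx (i : ℕ) = Q.t e}) :
    (StringMod k Q W).map e x jp =
      ∑ i : Fin W.letters.length,
        ((if h : W.letters.get i = (e, true) ∧ W.vtx (i : ℕ) = Q.s e ∧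
              W.vtx ((i : ℕ) + 1) = Q.t e then
            Pi.single (M := fun _ => k) (⟨i.succ, by simpa using h.2.2⟩ :
                {i : Fin (W.letters.length + 1) // W.vtx (i : ℕ) = Q.t e})
              (x ⟨i.castSucc, by simpa using h.2.1⟩) jp
          else 0)
        + (if h : W.letters.get i = (e, false) ∧ W.vtx ((i : ℕ) + 1) = Q.s e ∧
              W.vtx (i : ℕ) = Q.t e then
            Pi.single (M := fun _ => k) (⟨i.castSucc, by simpa using h.2.2⟩ :
                {i : Fin (W.letters.length + 1) // W.vtx (i : ℕ) = Q.t e})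
              (x ⟨i.succ, by simpa using h.2.1⟩) jp
          else 0)) := by
  rw [stringMod_map_def, LinearMap.sum_apply, carrier_sum_apply]
  refine Finset.sum_congr rfl fun i _ => ?_
  split_ifs with h1 h2 h2 <;> rfl

lemma map_comp_entryApp (Wb Wa : Walk Q) (ps pt : ℕ) (hso : NoOut Wa pt) (e : Q.E)
    (x : (StringMod k Q Wb).carrier (Q.s e)) :
    (StringMod k Q Wa).map e (entryApp (k := k) Wb Wa ps pt (Q.s e) x) = 0 := by
  funext jp
  rw [stringMod_map_apply, carrier_zero_apply]
  refine Finset.sum_eq_zero fun i _ => ?_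
  rcases hso i with ⟨h1, h2⟩
  split_ifs with hd hi hi
  · rw [entryApp_apply_ne _ _ _ _ _ _ _ (by simpa using fun hh => h1 ⟨hh, by rw [hd.1]⟩),
      entryApp_apply_ne _ _ _ _ _ _ _ (by simpa using fun hh => h2 ⟨hh, by rw [hi.1]⟩)]
    simp
  · rw [entryApp_apply_ne _ _ _ _ _ _ _ (by simpa using fun hh => h1 ⟨hh, by rw [hd.1]⟩)]
    simp
  · rw [entryApp_apply_ne _ _ _ _ _ _ _ (by simpa using fun hh => h2 ⟨hh, by rw [hi.1]⟩)]
    simp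
  · simp

lemma entryApp_comp_map (Wb Wa : Walk Q) (ps pt : ℕ) (hto : NoIn Wb ps) (e : Q.E)
    (x : (StringMod k Q Wb).carrier (Q.s e)) :
    entryApp (k := k) Wb Wa ps pt (Q.t e) ((StringMod k Q Wb).map e x) = 0 := by
  funext jp
  rw [entryApp_apply, carrier_zero_apply]
  split_ifs with h
  · refine Finset.sum_eq_zero fun ip _ => ?_
    split_ifs with hip
    · rw [stringMod_map_apply]
      refine Finset.sum_eq_zero fun i _ => ?_
      rcases hto i with ⟨h1, h2⟩
      split_ifs with hd hi hi
      · rw [Pi.single_apply, if_neg (fun hh => h1 ⟨by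
            have := congrArg (fun s => ((s : {i : Fin (Wb.letters.length + 1) //
              Wb.vtx (i : ℕ) = Q.t e}).1 : ℕ)) hh
            simpa [← hip] using this.symm, by rw [hd.1]⟩),
          Pi.single_apply, if_neg (fun hh => h2 ⟨by
            have := congrArg (fun s => ((s : {i : Fin (Wb.letters.length + 1) //
              Wb.vtx (i : ℕ) = Q.t e}).1 : ℕ)) hh
            simpa [← hip] using this.symm, by rw [hi.1]⟩)]
        simp
      · rw [Pi.single_apply, if_neg (fun hh => h1 ⟨by
            have := congrArg (fun s => ((s : {i : Fin (Wb.letters.length + 1) //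
              Wb.vtx (i : ℕ) = Q.t e}).1 : ℕ)) hh
            simpa [← hip] using this.symm, by rw [hd.1]⟩)]
        simp
      · rw [Pi.single_apply, if_neg (fun hh => h2 ⟨by
            have := congrArg (fun s => ((s : {i : Fin (Wb.letters.length + 1) //
              Wb.vtx (i : ℕ) = Q.t e}).1 : ℕ)) hh
            simpa [← hip] using this.symm, by rw [hi.1]⟩)]
        simp
      · simp
    · rfl
  · rfl

/-- The single-entry morphism of string modules, defined whenever the target position is
in the socle and the source position is in the top. -/
noncomputable def entryHom (Wb Wa : Walk Q) (ps pt : ℕ)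
    (hso : NoOut Wa pt) (hto : NoIn Wb ps) :
    RepHom (StringMod k Q Wb) (StringMod k Q Wa) where
  app v := entryApp Wb Wa ps pt v
  comm e := by
    apply LinearMap.ext
    intro x
    rw [LinearMap.comp_apply, LinearMap.comp_apply,
      map_comp_entryApp Wb Wa ps pt hso e x, entryApp_comp_map Wb Wa ps pt hto e x]

lemma entryHom_isEntryMap (Wb Wa : Walk Q) (ps pt : ℕ) (hso : NoOut Wa pt)
    (hto : NoIn Wb ps) : IsEntryMap Wb Wa ps pt (entryHom (k := k) Wb Wa ps pt hso hto) :=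
  fun _ _ _ => rfl

lemma noIn_triv (w : Q.V) (q : ℕ) : NoIn (trivWalk Q w) q := fun i => i.elim0

lemma vtx_triv (w : Q.V) (i : ℕ) : (trivWalk Q w).vtx i = w := by
  simp [Walk.vtx, trivWalk]

lemma vtx_arrow_zero (a : Q.E) : (arrowWalk Q a).vtx 0 = Q.s a := rfl

lemma vtx_arrow_one (a : Q.E) : (arrowWalk Q a).vtx 1 = Q.t a := by
  simp [Walk.vtx, arrowWalk, Walk.nextV]

lemma vtx_big_zero (a z : Q.E) (p : List Q.E) : (bigWalk Q a z p).vtx 0 = Q.t a := rfl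

lemma big_letters_length (a z : Q.E) (p : List Q.E) :
    (bigWalk Q a z p).letters.length = p.length + 2 := by
  simp [bigWalk]

lemma arrow_letters_length (a : Q.E) : (arrowWalk Q a).letters.length = 1 := rfl

lemma vtx_big_last (a z : Q.E) (p : List Q.E) :
    (bigWalk Q a z p).vtx (p.length + 2) = Q.s z := by
  unfold Walk.vtx bigWalk
  rw [List.take_of_length_le (by simp),
    show ((a, false) :: (p.map (fun b => (b, true)) ++ [(z, false)]))
      = (((a, false) :: p.map (fun b => (b, true))) ++ [(z, false)]) from rfl,
    List.foldl_append]
  simp [Walk.nextV]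

lemma entryHom_app_apply (Wb Wa : Walk Q) (ps pt : ℕ) (hso : NoOut Wa pt)
    (hto : NoIn Wb ps) (v : Q.V) (z : (StringMod k Q Wb).carrier v) (jp) :
    (entryHom (k := k) Wb Wa ps pt hso hto).app v z jp =
      if ((jp : {i : Fin (Wa.letters.length + 1) // Wa.vtx (i : ℕ) = v}).1 : ℕ) = pt then
        (∑ ip, if (ip.1 : ℕ) = ps then z ip else 0) else 0 := rfl

lemma noOut_arrow (a : Q.E) : NoOut (arrowWalk Q a) 1 := by
  intro i
  have hl : (arrowWalk Q a).letters.length = 1 := rfl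
  have h0 : (i : ℕ) = 0 := by have := i.isLt; omega
  have hg : (arrowWalk Q a).letters.get i = (a, true) := by
    have := List.get_mem (arrowWalk Q a).letters i
    simpa [arrowWalk] using this
  constructor
  · rintro ⟨h, -⟩; omega
  · rintro ⟨-, hb⟩; rw [hg] at hb; simp at hb

lemma noIn_arrow (a : Q.E) : NoIn (arrowWalk Q a) 0 := by
  intro i
  have hg : (arrowWalk Q a).letters.get i = (a, true) := by
    have := List.get_mem (arrowWalk Q a).letters i
    simpa [arrowWalk] using this
  constructor
  · rintro ⟨h, -⟩; omega
  · rintro ⟨-, hb⟩; rw [hg] at hb; simp at hb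

lemma noOut_big (a z : Q.E) (p : List Q.E) : NoOut (bigWalk Q a z p) 0 := by
  intro i
  constructor
  · rintro ⟨h, hb⟩
    have hg : (bigWalk Q a z p).letters.get i = (a, false) := by
      rw [List.get_eq_getElem]
      simp only [h]
      simp [bigWalk]
    rw [hg] at hb; simp at hb
  · rintro ⟨h, -⟩; omega

lemma noIn_big (a z : Q.E) (p : List Q.E) : NoIn (bigWalk Q a z p) (p.length + 2) := by
  intro i
  constructor
  · rintro ⟨h, hb⟩
    have h1 : (i : ℕ) = p.length + 1 := by omega
    have hg : (bigWalk Q a z p).letters.get i = (z, false) := by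
      rw [List.get_eq_getElem]
      simp only [h1]
      show ((a, false) :: (p.map (fun b => (b, true)) ++ [(z, false)]))[p.length + 1]'(by simp) = _
      rw [List.getElem_cons_succ]
      rw [List.getElem_append_right (by simp)]
      simp
    rw [hg] at hb; simp at hb
  · rintro ⟨h, -⟩
    have h2 := i.isLt
    have h3 := big_letters_length (Q := Q) a z p
    omega

lemma triv_pos_val {w v : Q.V}
    (ip : {i : Fin ((trivWalk Q w).letters.length + 1) // (trivWalk Q w).vtx (i : ℕ) = v}) :
    ((ip : {i : Fin ((trivWalk Q w).letters.length + 1) //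
      (trivWalk Q w).vtx (i : ℕ) = v}).1 : ℕ) = 0 := by
  have h1 := ip.1.isLt
  have h2 : (trivWalk Q w).letters.length = 0 := rfl
  omega

instance triv_pos_subsingleton (w v : Q.V) :
    Subsingleton {i : Fin ((trivWalk Q w).letters.length + 1) //
      (trivWalk Q w).vtx (i : ℕ) = v} :=
  ⟨fun a b => Subtype.ext (Fin.ext (by rw [triv_pos_val a, triv_pos_val b]))⟩

lemma entry_triv_injective (Wa : Walk Q) (pt : ℕ) (w : Q.V)
    (hso : NoOut Wa pt) (hpt : pt < Wa.letters.length + 1) (hv : Wa.vtx pt = w) (v : Q.V) :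
    Function.Injective
      ((entryHom (k := k) (trivWalk Q w) Wa 0 pt hso (noIn_triv w 0)).app v) := by
  intro z1 z2 h
  funext i
  have hvw : w = v := by
    have := i.2
    rwa [vtx_triv] at this
  have hjp : Wa.vtx ((⟨pt, hpt⟩ : Fin (Wa.letters.length + 1)) : ℕ) = v := by
    rw [show ((⟨pt, hpt⟩ : Fin (Wa.letters.length + 1)) : ℕ) = pt from rfl, hv]
    exact hvw
  have h2 := congrFun h (⟨⟨pt, hpt⟩, hjp⟩ :
    {i : Fin (Wa.letters.length + 1) // Wa.vtx (i : ℕ) = v})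
  have hval : ∀ z : (StringMod k Q (trivWalk Q w)).carrier v,
      (entryHom (k := k) (trivWalk Q w) Wa 0 pt hso (noIn_triv w 0)).app v z
        ⟨⟨pt, hpt⟩, hjp⟩ = z i := by
    intro z
    erw [entryHom_app_apply, if_pos rfl,
      Finset.sum_congr rfl (fun ip _ => if_pos (triv_pos_val ip))]
    exact Fintype.sum_subsingleton _ i
  rw [hval z1, hval z2] at h2
  exact h2

lemma ker_lemma (Wb Wa : Walk Q) (q : ℕ) (w : Q.V)
    (t' : RepHom (StringMod k Q Wb) (StringMod k Q Wa))
    (ht : IsEntryMap Wb Wa 0 q t')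
    (hb1 : Wb.letters.length = 1)
    (hso : NoOut Wb 1)
    (hq : q < Wa.letters.length + 1)
    (hqv : Wa.vtx q = Wb.vtx 0)
    (hw : Wb.vtx 1 = w) :
    ∃ ι : RepHom (StringMod k Q (trivWalk Q w)) (StringMod k Q Wb),
      (∀ v, Function.Injective (ι.app v)) ∧
      ∀ v, LinearMap.range (ι.app v) = LinearMap.ker (t'.app v) := by
  refine ⟨entryHom (trivWalk Q w) Wb 0 1 hso (noIn_triv w 0),
    fun v => entry_triv_injective Wb 1 w hso (by omega) hw v, fun v => ?_⟩
  ext xx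
  simp only [LinearMap.mem_range, LinearMap.mem_ker]
  constructor
  · rintro ⟨z, rfl⟩
    funext jp
    rw [ht v _ jp, carrier_zero_apply]
    split_ifs with h
    · refine Finset.sum_eq_zero fun ip _ => ?_
      split_ifs with hip
      · rw [entryHom_app_apply, if_neg (by rw [hip]; omega)]
      · rfl
    · rfl
  · intro hx
    have hval : ∀ ip : {i : Fin (Wb.letters.length + 1) // Wb.vtx (i : ℕ) = v},
        (ip.1 : ℕ) = 0 → xx ip = 0 := by
      intro ip hip0
      have hv0 : Wb.vtx 0 = v := by
        have := ip.2; rwa [hip0] at this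
      have hJP : Wa.vtx ((⟨q, hq⟩ : Fin (Wa.letters.length + 1)) : ℕ) = v := by
        rw [show ((⟨q, hq⟩ : Fin (Wa.letters.length + 1)) : ℕ) = q from rfl, hqv]
        exact hv0
      have h0 := congrFun hx (⟨⟨q, hq⟩, hJP⟩ :
        {i : Fin (Wa.letters.length + 1) // Wa.vtx (i : ℕ) = v})
      erw [ht v xx ⟨⟨q, hq⟩, hJP⟩, carrier_zero_apply, if_pos rfl,
        Finset.sum_eq_single ip (fun b _ hb => if_neg (fun hb0 =>
          hb (Subtype.ext (Fin.ext (by rw [hb0, hip0])))))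
        (fun hb => absurd (Finset.mem_univ ip) hb), if_pos hip0] at h0
      exact h0
    refine ⟨fun i => xx ⟨⟨1, by omega⟩, by
      rw [show ((⟨1, by omega⟩ : Fin (Wb.letters.length + 1)) : ℕ) = 1 from rfl, hw]
      have := i.2; rwa [vtx_triv] at this⟩, ?_⟩
    funext jp
    erw [entryHom_app_apply]
    by_cases h1 : ((jp : {i : Fin (Wb.letters.length + 1) //
        Wb.vtx (i : ℕ) = v}).1 : ℕ) = 1
    · rw [if_pos h1]
      have hvw : Wb.vtx 1 = v := by
        have := jp.2; rwa [h1] at this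
      have i0 : {i : Fin ((trivWalk Q w).letters.length + 1) //
          (trivWalk Q w).vtx (i : ℕ) = v} :=
        ⟨⟨0, by omega⟩, by rw [vtx_triv, ← hw]; exact hvw⟩
      rw [Finset.sum_congr rfl (fun ip _ => if_pos (triv_pos_val ip)),
        Fintype.sum_subsingleton _ i0]
      have hjj : jp = ⟨⟨1, by omega⟩, hvw⟩ := Subtype.ext (Fin.ext (by rw [h1]))
      rw [hjj]
    · rw [if_neg h1]
      have h0 : ((jp : {i : Fin (Wb.letters.length + 1) //
          Wb.vtx (i : ℕ) = v}).1 : ℕ) = 0 := by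
        have := jp.1.isLt; omega
      exact (hval jp h0).symm

lemma range_lemma (Wb Wa : Walk Q) (ps : ℕ) (w : Q.V)
    (t' : RepHom (StringMod k Q Wb) (StringMod k Q Wa))
    (ht : IsEntryMap Wb Wa ps 0 t')
    (hso : NoOut Wa 0)
    (hps : ps < Wb.letters.length + 1)
    (hpv : Wb.vtx ps = w)
    (hav : Wa.vtx 0 = w) :
    ∃ ι : RepHom (StringMod k Q (trivWalk Q w)) (StringMod k Q Wa),
      (∀ v, Function.Injective (ι.app v)) ∧
      ∀ v, LinearMap.range (ι.app v) = LinearMap.range (t'.app v) := by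
  refine ⟨entryHom (trivWalk Q w) Wa 0 0 hso (noIn_triv w 0),
    fun v => entry_triv_injective Wa 0 w hso (by omega) hav v, fun v => ?_⟩
  have iotaval : ∀ (z : (StringMod k Q (trivWalk Q w)).carrier v) jp,
      (entryHom (k := k) (trivWalk Q w) Wa 0 0 hso (noIn_triv w 0)).app v z jp
      = if ((jp : {i : Fin (Wa.letters.length + 1) //
            Wa.vtx (i : ℕ) = v}).1 : ℕ) = 0 then (∑ ip, z ip) else 0 := by
    intro z jp
    rw [entryHom_app_apply]
    split_ifs with h
    · erw [Finset.sum_congr rfl (fun ip _ => if_pos (triv_pos_val ip))]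
    · rfl
  ext xx
  simp only [LinearMap.mem_range]
  by_cases hvw : v = w
  · subst hvw
    constructor
    · rintro ⟨z, rfl⟩
      refine ⟨fun ip => if ip = (⟨⟨ps, hps⟩, hpv⟩ :
        {i : Fin (Wb.letters.length + 1) // Wb.vtx (i : ℕ) = v}) then (∑ i, z i)
        else 0, ?_⟩
      funext jp
      erw [ht v _ jp, iotaval z jp]
      split_ifs with h
      · rw [Finset.sum_eq_single (⟨⟨ps, hps⟩, hpv⟩ :
            {i : Fin (Wb.letters.length + 1) // Wb.vtx (i : ℕ) = v})
            (fun b _ hb => by simp only [if_neg hb, ite_self])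
            (fun hb => absurd (Finset.mem_univ _) hb)]
        rw [if_pos (show (((⟨⟨ps, hps⟩, hpv⟩ : {i : Fin (Wb.letters.length + 1) //
          Wb.vtx (i : ℕ) = v})).1 : ℕ) = ps from rfl), if_pos rfl]
      · rfl
    · rintro ⟨xb, rfl⟩
      refine ⟨fun _ => ∑ ip, if (ip.1 : ℕ) = ps then xb ip else 0, ?_⟩
      funext jp
      erw [ht v xb jp, iotaval _ jp]
      split_ifs with h
      · exact Fintype.sum_subsingleton _
          (⟨⟨0, by omega⟩, vtx_triv v 0⟩ : {i : Fin ((trivWalk Q v).letters.length + 1) //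
            (trivWalk Q v).vtx (i : ℕ) = v})
      · rfl
  · have hz : ∀ jp : {i : Fin (Wa.letters.length + 1) // Wa.vtx (i : ℕ) = v},
        ((jp : {i : Fin (Wa.letters.length + 1) // Wa.vtx (i : ℕ) = v}).1 : ℕ) ≠ 0 := by
      intro jp hc
      apply hvw
      have := jp.2
      rw [hc] at this
      rw [← this, hav]
    constructor
    · rintro ⟨z, rfl⟩
      refine ⟨0, ?_⟩
      funext jp
      rw [ht v 0 jp, iotaval z jp, if_neg (hz jp), if_neg (hz jp)]
    · rintro ⟨xb, rfl⟩
      refine ⟨0, ?_⟩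
      funext jp
      rw [ht v xb jp, iotaval 0 jp, if_neg (hz jp), if_neg (hz jp)]

end Quiv

open Quiv Quiv.Walk in
/-- In an admissible cycle of degree `n`, the kernel of the natural
morphism with domain `M(αⱼ)` (for `j ∈ {2,…,n-1}`) is the simple module `Sⱼ` at the
target of `αⱼ`, and the image of the morphism `M(α₂) → M(α₁⁻¹ p αₙ⁻¹)` is the simple
module `S₁` at the target of `α₁`. -/
theorem admissibleCycle_kernels_and_image
    (Q : Quiv) (R : Set (List Q.E)) (hR : ∀ l ∈ R, l.length = 2)
    (k : Type) [Field k]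
    (x y : Q.V) (u p : List Q.E) (n : ℕ)
    (hred : Q.IsReducedBasic R x y u p)
    (hlen : u.length = n) (hn : 2 ≤ n) :
    ∃ t : ∀ j : ℕ,
        RepHom
          (StringMod k Q (Q.cycWalk u p (List.ne_nil_of_length_pos (by omega)) n j))
          (StringMod k Q
            (Q.cycWalk u p (List.ne_nil_of_length_pos (by omega)) n (j + 1))),
      (∀ j, IsEntryMap _ _ (Q.cycPosSrc p n j) (Q.cycPosTgt n j) (t j)) ∧
      -- the kernel of each morphism whose domain is an arrow module `M(αⱼ)`
      -- is the simple module at the target of `αⱼ`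
      (∀ j : ℕ, j % (n - 1) ≠ 0 →
        ∃ ι : RepHom
            (StringMod k Q (trivWalk Q
              (Q.t (u.getD (n - 1 - (j % (n - 1)))
                (u.head (List.ne_nil_of_length_pos (by omega)))))))
            (StringMod k Q
              (Q.cycWalk u p (List.ne_nil_of_length_pos (by omega)) n j)),
          (∀ v, Function.Injective (ι.app v)) ∧
          ∀ v, LinearMap.range (ι.app v) = LinearMap.ker ((t j).app v)) ∧
      -- the image of the morphism `M(α₂) → M(α₁⁻¹ p αₙ⁻¹)` is the simple module `S₁`
      (∀ j : ℕ, (j + 1) % (n - 1) = 0 →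
        ∃ ι : RepHom
            (StringMod k Q (trivWalk Q
              (Q.t (u.head (List.ne_nil_of_length_pos (by omega))))))
            (StringMod k Q
              (Q.cycWalk u p (List.ne_nil_of_length_pos (by omega)) n (j + 1))),
          (∀ v, Function.Injective (ι.app v)) ∧
          ∀ v, LinearMap.range (ι.app v) = LinearMap.range ((t j).app v)) := by
  have hu : u ≠ [] := List.ne_nil_of_length_pos (by omega)
  have hpath : Q.IsPath u := hred.2.1.1
  have hstep : ∀ (i : ℕ), i + 1 < n → ∀ d d' : Q.E,
      Q.t (u.getD i d) = Q.s (u.getD (i + 1) d') := by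
    intro i hi d d'
    have h1 : i < u.length := by omega
    have h2 : i + 1 < u.length := by omega
    rw [List.getD_eq_getElem u d h1, List.getD_eq_getElem u d' h2]
    have h3 := List.isChain_iff_getElem.mp hpath i (by omega)
    simpa [List.get_eq_getElem] using h3
  have hhead : u.head hu = u.getD 0 (u.head hu) := by
    rw [List.getD_eq_getElem u _ (show 0 < u.length by omega), List.head_eq_getElem]
  have hmodsucc : ∀ jj : ℕ, 2 ≤ n - 1 → (jj + 1) % (n - 1) = 0 →
      jj % (n - 1) = n - 2 := by
    intro jj h2 h0
    have hmod1 : (jj + 1) % (n - 1) = (jj % (n - 1) + 1) % (n - 1) := by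
      conv_lhs => rw [Nat.add_mod jj 1 (n - 1)]
      rw [Nat.mod_eq_of_lt (show 1 < n - 1 by omega)]
    rw [hmod1] at h0
    have hlt := Nat.mod_lt jj (show 0 < n - 1 by omega)
    rcases Nat.lt_or_ge (jj % (n - 1) + 1) (n - 1) with hlt2 | hge
    · rw [Nat.mod_eq_of_lt hlt2] at h0; omega
    · omega
  have hmodne : ∀ jj : ℕ, 2 ≤ n - 1 → (jj + 1) % (n - 1) ≠ 0 →
      (jj + 1) % (n - 1) = jj % (n - 1) + 1 := by
    intro jj h2 hne
    have hmod1 : (jj + 1) % (n - 1) = (jj % (n - 1) + 1) % (n - 1) := by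
      conv_lhs => rw [Nat.add_mod jj 1 (n - 1)]
      rw [Nat.mod_eq_of_lt (show 1 < n - 1 by omega)]
    have hlt := Nat.mod_lt jj (show 0 < n - 1 by omega)
    rcases Nat.lt_or_ge (jj % (n - 1) + 1) (n - 1) with hlt2 | hge
    · rw [hmod1]; exact Nat.mod_eq_of_lt hlt2
    · exfalso; apply hne; rw [hmod1]
      have heq : jj % (n - 1) + 1 = n - 1 := by omega
      rw [heq, Nat.mod_self]
  have hso : ∀ j : ℕ, NoOut (Q.cycWalk u p hu n (j + 1)) (Q.cycPosTgt n j) := by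
    intro j
    unfold cycPosTgt cycWalk
    by_cases h : (j + 1) % (n - 1) = 0
    · rw [if_pos h, if_pos h]
      exact noOut_big _ _ _
    · rw [if_neg h, if_neg h]
      exact noOut_arrow _
  have hto : ∀ j : ℕ, NoIn (Q.cycWalk u p hu n j) (Q.cycPosSrc p n j) := by
    intro j
    unfold cycPosSrc cycWalk
    by_cases h : j % (n - 1) = 0
    · rw [if_pos h, if_pos h]
      exact noIn_big _ _ _
    · rw [if_neg h, if_neg h]
      exact noIn_arrow _
  refine ⟨fun j => entryHom _ _ _ _ (hso j) (hto j),
    fun j => entryHom_isEntryMap _ _ _ _ (hso j) (hto j), ?_, ?_⟩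
  · -- kernels
    intro j hj
    have hn1 : 2 ≤ n - 1 := by
      by_contra hc
      have h1 : n - 1 = 1 := by omega
      rw [h1, Nat.mod_one] at hj
      exact hj rfl
    have hj1' : 1 ≤ j % (n - 1) := Nat.one_le_iff_ne_zero.mpr hj
    have hjlt : j % (n - 1) < n - 1 := Nat.mod_lt j (by omega)
    have htj := entryHom_isEntryMap (k := k) _ _ (Q.cycPosSrc p n j) (Q.cycPosTgt n j)
      (hso j) (hto j)
    have hps0 : Q.cycPosSrc p n j = 0 := by
      unfold cycPosSrc; rw [if_neg hj]
    replace htj := fun v xx jp => by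
      have h5 := htj v xx jp; conv_rhs at h5 => rw [hps0]
      exact h5
    have hb1 : (Q.cycWalk u p hu n j).letters.length = 1 := by
      unfold cycWalk; rw [if_neg hj]; rfl
    have hsoW : NoOut (Q.cycWalk u p hu n j) 1 := by
      unfold cycWalk; rw [if_neg hj]; exact noOut_arrow _
    have hw : (Q.cycWalk u p hu n j).vtx 1
        = Q.t (u.getD (n - 1 - j % (n - 1)) (u.head hu)) := by
      unfold cycWalk; rw [if_neg hj]; exact vtx_arrow_one _
    have hq : Q.cycPosTgt n j < (Q.cycWalk u p hu n (j + 1)).letters.length + 1 := by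
      unfold cycPosTgt cycWalk
      by_cases h : (j + 1) % (n - 1) = 0
      · rw [if_pos h]; omega
      · rw [if_neg h, if_neg h, arrow_letters_length]; omega
    have hqv : (Q.cycWalk u p hu n (j + 1)).vtx (Q.cycPosTgt n j)
        = (Q.cycWalk u p hu n j).vtx 0 := by
      have hrhs : (Q.cycWalk u p hu n j).vtx 0
          = Q.s (u.getD (n - 1 - j % (n - 1)) (u.head hu)) := by
        unfold cycWalk; rw [if_neg hj]; rfl
      rw [hrhs]
      unfold cycPosTgt cycWalk
      by_cases h : (j + 1) % (n - 1) = 0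
      · rw [if_pos h, if_pos h, vtx_big_zero]
        have hr2 : j % (n - 1) = n - 2 := hmodsucc j hn1 h
        have hidx : n - 1 - j % (n - 1) = 1 := by omega
        rw [hidx, hhead]
        exact hstep 0 (by omega) _ _
      · rw [if_neg h, if_neg h, vtx_arrow_one, hmodne j hn1 h]
        have hidx : n - 1 - j % (n - 1) = (n - 1 - (j % (n - 1) + 1)) + 1 := by omega
        rw [hidx]
        exact hstep _ (by omega) _ _
    exact ker_lemma _ _ _ _ _ htj hb1 hsoW hq hqv hw
  · -- image
    intro j hj1
    have htj := entryHom_isEntryMap (k := k) _ _ (Q.cycPosSrc p n j) (Q.cycPosTgt n j)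
      (hso j) (hto j)
    have hpt0 : Q.cycPosTgt n j = 0 := by
      unfold cycPosTgt; rw [if_pos hj1]
    replace htj := fun v xx jp => by
      have h5 := htj v xx jp; conv_rhs at h5 => rw [hpt0]
      exact h5
    have hso0 : NoOut (Q.cycWalk u p hu n (j + 1)) 0 := by
      unfold cycWalk; rw [if_pos hj1]; exact noOut_big _ _ _
    have hav : (Q.cycWalk u p hu n (j + 1)).vtx 0 = Q.t (u.head hu) := by
      unfold cycWalk; rw [if_pos hj1]; exact vtx_big_zero _ _ _
    by_cases hj : j % (n - 1) = 0
    · -- here n = 2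
      have hdvd1 : (n - 1) ∣ 1 := by
        have d1 : (n - 1) ∣ j := Nat.dvd_of_mod_eq_zero hj
        have d2 : (n - 1) ∣ (j + 1) := Nat.dvd_of_mod_eq_zero hj1
        have d3 := Nat.dvd_sub d2 d1
        simpa using d3
      have hn2 : n = 2 := by
        have h1 := Nat.le_of_dvd (by omega) hdvd1
        omega
      have hps : Q.cycPosSrc p n j < (Q.cycWalk u p hu n j).letters.length + 1 := by
        unfold cycPosSrc cycWalk
        rw [if_pos hj, if_pos hj, big_letters_length]
        omega
      have hpv : (Q.cycWalk u p hu n j).vtx (Q.cycPosSrc p n j) = Q.t (u.head hu) := by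
        unfold cycPosSrc cycWalk
        rw [if_pos hj, if_pos hj, vtx_big_last]
        have hlast : u.getLast hu = u.getD 1 (u.head hu) := by
          rw [List.getD_eq_getElem u _ (show 1 < u.length by omega),
            List.getLast_eq_getElem]
          have hl1 : u.length - 1 = 1 := by omega
          simp only [hl1]
        rw [hlast, hhead]
        exact (hstep 0 (by omega) _ _).symm
      exact range_lemma _ _ _ _ _ htj hso0 hps hpv hav
    · have hn1 : 2 ≤ n - 1 := by
        by_contra hc
        have h1 : n - 1 = 1 := by omega
        rw [h1, Nat.mod_one] at hj
        exact hj rfl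
      have hr2 : j % (n - 1) = n - 2 := hmodsucc j hn1 hj1
      have hps : Q.cycPosSrc p n j < (Q.cycWalk u p hu n j).letters.length + 1 := by
        unfold cycPosSrc; rw [if_neg hj]; omega
      have hpv : (Q.cycWalk u p hu n j).vtx (Q.cycPosSrc p n j) = Q.t (u.head hu) := by
        unfold cycPosSrc cycWalk
        rw [if_neg hj, if_neg hj, vtx_arrow_zero]
        have hidx : n - 1 - j % (n - 1) = 1 := by omega
        rw [hidx, hhead]
        exact (hstep 0 (by omega) _ _).symm
      exact range_lemma _ _ _ _ _ htj hso0 hps hpv hav
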